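/- arXiv:0909.1992 — 8 statements merged into one kernel-verified Lean document; each statement's English description precedes it below -/
import Mathlib

section
/- Let X be a Banach space, E ⊆ X a weakly compact set with no vector of maximum length. Then the norm-closed convex hull K = co̅(E) has no vector of maximum length; in particular K is not remotal from 0. -/
/-!
Let `k` lie in the closed convex hull `K` of `E`, and let `g` be a norming functional for `k`:
`‖g‖ ≤ 1` and `g k = ‖k‖`. Since `g` is weakly continuous, it attains its maximum on the weakly
compact set `E` at some `e`, and the closed half-space `{g ≤ g e}` contains `K`. Hence
`‖k‖ = g k ≤ g e ≤ ‖e‖`, so every norm on `K` is dominated by a norm on `E`, which stays below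
the supremum. As `E ⊆ K`, that supremum is also the supremum of the norms on `K`.
-/

def IsRemotalFrom {Y : Type*} [SeminormedAddCommGroup Y] (S : Set Y) (x : Y) : Prop :=
  ∃ s ∈ S, ‖x - s‖ = sSup ((fun t => ‖x - t‖) '' S)

theorem not_isRemotalFrom_zero_of_forall_norm_lt {Y : Type*} [SeminormedAddCommGroup Y]
    {S T : Set Y} (hST : S ⊆ T) (hS : S.Nonempty)
    (h : ∀ t ∈ T, ‖t‖ < sSup (norm '' S)) : ¬ IsRemotalFrom T 0 := by
  rintro ⟨s, hs, hsup⟩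
  have hbdd : BddAbove (norm '' T) := ⟨_, Set.forall_mem_image.mpr fun t ht => (h t ht).le⟩
  simp only [zero_sub, norm_neg] at hsup
  have hle : sSup (norm '' S) ≤ ‖s‖ :=
    hsup ▸ csSup_le_csSup hbdd (hS.image _) (Set.image_mono hST)
  exact (h s hs).not_ge hle

section

variable {X : Type*} [NormedAddCommGroup X] [NormedSpace ℝ X]

theorem exists_forall_le_of_isCompact_toWeakSpace {E : Set X}
    (hE : IsCompact (toWeakSpace ℝ X '' E)) (hne : E.Nonempty) (g : StrongDual ℝ X) :
    ∃ e ∈ E, ∀ x ∈ closure (convexHull ℝ E), g x ≤ g e := by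
  have hg : Continuous fun w : WeakSpace ℝ X => g ((toWeakSpace ℝ X).symm w) :=
    WeakBilin.eval_continuous _ g
  obtain ⟨-, ⟨e, he, rfl⟩, hmax⟩ := hE.exists_isMaxOn (hne.image _) hg.continuousOn
  refine ⟨e, he, fun x hx => closure_minimal (t := {x | g x ≤ g e}) (convexHull_min ?_ ?_) ?_ hx⟩
  · exact fun t ht => by simpa using hmax (Set.mem_image_of_mem _ ht)
  · exact convex_halfSpace_le g.toLinearMap.isLinear _
  · exact isClosed_le g.continuous continuous_const

theorem exists_norm_le_of_mem_closure_convexHull {E : Set X}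
    (hE : IsCompact (toWeakSpace ℝ X '' E)) {k : X} (hk : k ∈ closure (convexHull ℝ E)) :
    ∃ e ∈ E, ‖k‖ ≤ ‖e‖ := by
  have hne : E.Nonempty := convexHull_nonempty_iff.mp (closure_nonempty_iff.mp ⟨k, hk⟩)
  obtain ⟨g, hg, hgk⟩ := exists_dual_vector'' ℝ k
  obtain ⟨e, he, hmax⟩ := exists_forall_le_of_isCompact_toWeakSpace hE hne g
  refine ⟨e, he, ?_⟩
  calc ‖k‖ = g k := hgk.symm
    _ ≤ g e := hmax k hk
    _ ≤ ‖g‖ * ‖e‖ := (le_abs_self _).trans (g.le_opNorm e)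
    _ ≤ ‖e‖ := mul_le_of_le_one_left (norm_nonneg e) hg

end

theorem stmt3_general {X : Type*} [NormedAddCommGroup X] [NormedSpace ℝ X]
    (E : Set X) (hEne : E.Nonempty)
    (hEwc : IsCompact ((toWeakSpace ℝ X) '' E))
    (hno : ∀ e ∈ E, ‖e‖ < sSup ((fun e => ‖e‖) '' E)) :
    (∀ k ∈ closure (convexHull ℝ E),
        ‖k‖ < sSup ((fun e => ‖e‖) '' E)) ∧
      ¬ IsRemotalFrom (closure (convexHull ℝ E)) (0 : X) := by
  have hK : ∀ k ∈ closure (convexHull ℝ E), ‖k‖ < sSup ((fun e => ‖e‖) '' E) := fun k hk => by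
    obtain ⟨e, he, hke⟩ := exists_norm_le_of_mem_closure_convexHull hEwc hk
    exact hke.trans_lt (hno e he)
  exact ⟨hK, not_isRemotalFrom_zero_of_forall_norm_lt
    ((subset_convexHull ℝ E).trans subset_closure) hEne hK⟩

/-- Let `E` be a weakly compact subset of a Banach space `X` with no
vector of maximum length. Then the norm-closed convex hull `K = co̅(E)` has no vector of
maximum length; in particular `K` is not remotal from `0`. -/
theorem stmt3 {X : Type*} [NormedAddCommGroup X] [NormedSpace ℝ X] [CompleteSpace X]
    (E : Set X) (hEne : E.Nonempty)
    (hEwc : IsCompact ((toWeakSpace ℝ X) '' E))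
    (hno : ∀ e ∈ E, ‖e‖ < sSup ((fun e => ‖e‖) '' E)) :
    (∀ k ∈ closure (convexHull ℝ E),
        ‖k‖ < sSup ((fun e => ‖e‖) '' E)) ∧
      ¬ IsRemotalFrom (closure (convexHull ℝ E)) (0 : X) :=
  stmt3_general E hEne hEwc hno
end

section
/- Let X be a Banach space failing the Schur property, and let (xₙ) be a sequence of unit vectors converging weakly to 0. Then the closed convex hull K = co̅({(n/(n+1))·xₙ : n ∈ ℕ} ∪ {0}) is a closed bounded convex set that is not remotal from 0. -/
open Filter

/-- A Banach space has the Schur property if every weakly convergent sequence is norm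
convergent. -/
def SchurProperty (X : Type*) [NormedAddCommGroup X] [NormedSpace ℝ X] : Prop :=
  ∀ (u : ℕ → X) (x : X),
    (∀ f : X →L[ℝ] ℝ, Tendsto (fun n => f (u n)) atTop (nhds (f x))) →
    Tendsto u atTop (nhds x)

/-!
Put `y n = (n / (n + 1)) • x n`. Given `t ∈ K`, a norming functional `f` of `t` satisfies
`f (y n) ≤ ‖y n‖ < 1` and `f (y n) → 0`, so `f ≤ M` on the generators, hence on `K`, for some
`M < 1`; thus `‖t‖ = f t < 1`. But `‖y n‖ = n / (n + 1) → 1`, so the supremum `1` of the norm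
over `K` is not attained.
-/
open Topology

lemma exists_lt_forall_le_of_eventually_le {a : ℕ → ℝ} {b r : ℝ} (ha : ∀ n, a n < r)
    (hab : ∀ᶠ n in atTop, a n ≤ b) (hb : b < r) : ∃ M, b ≤ M ∧ M < r ∧ ∀ n, a n ≤ M := by
  obtain ⟨N, hN⟩ := eventually_atTop.1 hab
  set F := insert b ((Finset.range N).image a)
  have hbF : b ∈ F := Finset.mem_insert_self _ _
  refine ⟨F.max' (Finset.insert_nonempty _ _), F.le_max' b hbF, ?_, fun n => ?_⟩
  · exact (F.max'_lt_iff _).2 (by simp [F, hb, ha])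
  · rcases lt_or_ge n N with hn | hn
    · exact F.le_max' _
        (Finset.mem_insert_of_mem (Finset.mem_image_of_mem a (Finset.mem_range.2 hn)))
    · exact (hN n hn).trans (F.le_max' b hbF)

section

variable {E : Type*} [NormedAddCommGroup E] [NormedSpace ℝ E]

lemma norm_lt_of_mem_closure_convexHull {s : Set E} {r : ℝ}
    (hs : ∀ f : E →L[ℝ] ℝ, ‖f‖ ≤ 1 → ∃ M < r, ∀ y ∈ s, f y ≤ M) {t : E}
    (ht : t ∈ closure (convexHull ℝ s)) : ‖t‖ < r := by
  obtain ⟨f, hf, hft⟩ := exists_dual_vector'' ℝ t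
  obtain ⟨M, hMr, hM⟩ := hs f hf
  have hK : closure (convexHull ℝ s) ⊆ {y | f y ≤ M} :=
    closure_minimal (convexHull_min hM (convex_halfSpace_le f.isLinear M))
      (isClosed_le f.continuous continuous_const)
  have hftM : f t ≤ M := hK ht
  rw [hft] at hftM
  exact hftM.trans_lt hMr

lemma exists_lt_forall_apply_le_of_weakly_null {y : ℕ → E} {r : ℝ} (hy : ∀ n, ‖y n‖ < r)
    (hweak : ∀ f : E →L[ℝ] ℝ, Tendsto (fun n => f (y n)) atTop (𝓝 0))
    (f : E →L[ℝ] ℝ) (hf : ‖f‖ ≤ 1) : ∃ M < r, ∀ z ∈ Set.range y ∪ {0}, f z ≤ M := by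
  have hr : 0 < r := (norm_nonneg _).trans_lt (hy 0)
  have hfy : ∀ n, f (y n) < r := fun n =>
    calc f (y n) ≤ ‖f (y n)‖ := le_abs_self _
      _ ≤ ‖f‖ * ‖y n‖ := f.le_opNorm _
      _ ≤ ‖y n‖ := mul_le_of_le_one_left (norm_nonneg _) hf
      _ < r := hy n
  have hev : ∀ᶠ n in atTop, f (y n) ≤ r / 2 := (hweak f).eventually (ge_mem_nhds (half_pos hr))
  obtain ⟨M, hM0, hMr, hM⟩ := exists_lt_forall_le_of_eventually_le hfy hev (half_lt_self hr)
  refine ⟨M, hMr, ?_⟩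
  rintro z (⟨n, rfl⟩ | rfl)
  · exact hM n
  · simpa using (half_pos hr).le.trans hM0

end

lemma not_isRemotalFrom_of_tendsto {Y : Type*} [SeminormedAddCommGroup Y] {K : Set Y} {x : Y}
    {r : ℝ} (hK : ∀ t ∈ K, ‖x - t‖ < r) {u : ℕ → Y} (hu : ∀ n, u n ∈ K)
    (hlim : Tendsto (fun n => ‖x - u n‖) atTop (𝓝 r)) : ¬ IsRemotalFrom K x := by
  have hsup : sSup ((fun t => ‖x - t‖) '' K) = r := by
    refine IsLUB.csSup_eq ⟨?_, fun b hb => ?_⟩ ⟨_, u 0, hu 0, rfl⟩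
    · rintro _ ⟨t, ht, rfl⟩
      exact (hK t ht).le
    · exact le_of_tendsto' hlim fun n => hb ⟨u n, hu n, rfl⟩
  rintro ⟨s, hs, hsr⟩
  exact (hK s hs).ne (hsr.trans hsup)

theorem stmt4_general {X : Type*} [NormedAddCommGroup X] [NormedSpace ℝ X]
    (x : ℕ → X) (hx : ∀ n, ‖x n‖ = 1)
    (hweak : ∀ f : X →L[ℝ] ℝ, Tendsto (fun n => f (x n)) atTop (nhds 0)) :
    IsClosed (closure (convexHull ℝ
        ((Set.range fun n : ℕ => ((n : ℝ) / (n + 1)) • x n) ∪ {0}))) ∧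
      Bornology.IsBounded (closure (convexHull ℝ
        ((Set.range fun n : ℕ => ((n : ℝ) / (n + 1)) • x n) ∪ {0}))) ∧
      Convex ℝ (closure (convexHull ℝ
        ((Set.range fun n : ℕ => ((n : ℝ) / (n + 1)) • x n) ∪ {0}))) ∧
      ¬ IsRemotalFrom (closure (convexHull ℝ
        ((Set.range fun n : ℕ => ((n : ℝ) / (n + 1)) • x n) ∪ {0}))) (0 : X) := by
  set y : ℕ → X := fun n => ((n : ℝ) / (n + 1)) • x n
  have hc : Tendsto (fun n : ℕ => (n : ℝ) / (n + 1)) atTop (𝓝 1) :=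
    tendsto_natCast_div_add_atTop 1
  have hy : ∀ n, ‖y n‖ = n / (n + 1) := fun n => by
    rw [norm_smul, hx, mul_one, Real.norm_of_nonneg (by positivity)]
  have hy1 : ∀ n, ‖y n‖ < 1 := fun n => by
    rw [hy, div_lt_one (by positivity)]
    exact lt_add_one _
  have hyweak : ∀ f : X →L[ℝ] ℝ, Tendsto (fun n => f (y n)) atTop (𝓝 0) := fun f => by
    simpa [y] using hc.mul (hweak f)
  have hK : ∀ t ∈ closure (convexHull ℝ (Set.range y ∪ {0})), ‖t‖ < 1 := fun t =>
    norm_lt_of_mem_closure_convexHull (exists_lt_forall_apply_le_of_weakly_null hy1 hyweak)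
  refine ⟨isClosed_closure, Metric.isBounded_ball.subset fun t ht => mem_ball_zero_iff.2 (hK t ht),
    (convex_convexHull ℝ _).closure, ?_⟩
  refine not_isRemotalFrom_of_tendsto (fun t ht => by simpa using hK t ht)
    (fun n => subset_closure (subset_convexHull ℝ _ (Or.inl ⟨n, rfl⟩))) ?_
  simpa [hy] using hc

/-- Let `X` be a Banach space failing the Schur property and `(xₙ)` a
sequence of unit vectors converging weakly to `0`. Then the closed convex hull
`K = co̅({(n/(n+1)) • xₙ : n ∈ ℕ} ∪ {0})` is a closed bounded convex set that is not
remotal from `0`. -/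
theorem stmt4 {X : Type*} [NormedAddCommGroup X] [NormedSpace ℝ X] [CompleteSpace X]
    (hSchur : ¬ SchurProperty X)
    (x : ℕ → X) (hx : ∀ n, ‖x n‖ = 1)
    (hweak : ∀ f : X →L[ℝ] ℝ, Tendsto (fun n => f (x n)) atTop (nhds 0)) :
    IsClosed (closure (convexHull ℝ
        ((Set.range fun n : ℕ => ((n : ℝ) / (n + 1)) • x n) ∪ {0}))) ∧
      Bornology.IsBounded (closure (convexHull ℝ
        ((Set.range fun n : ℕ => ((n : ℝ) / (n + 1)) • x n) ∪ {0}))) ∧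
      Convex ℝ (closure (convexHull ℝ
        ((Set.range fun n : ℕ => ((n : ℝ) / (n + 1)) • x n) ∪ {0}))) ∧
      ¬ IsRemotalFrom (closure (convexHull ℝ
        ((Set.range fun n : ℕ => ((n : ℝ) / (n + 1)) • x n) ∪ {0}))) (0 : X) :=
  stmt4_general x hx hweak
end

section
/- Let X = ℝ ⊕_∞ ℓ², the direct sum with the max norm, let (eₙ) be the canonical orthonormal basis of ℓ², and let E = {((n/(n+1)), (n/(n+1))·eₙ) : n ∈ ℕ}. Then E is a norm-closed bounded set that is not remotal from 0, while its closed convex hull co̅(E) is remotal from 0 (indeed (1,0) ∈ co̅(E) and ‖(1,0)‖ = 1 = sup{‖e‖ : e ∈ E}). -/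
noncomputable section

/-- The set `E = {((n/(n+1)), (n/(n+1))·eₙ) : n ∈ ℕ}` in `ℝ ⊕_∞ ℓ²` (the product carries
the max norm), where `eₙ` is the canonical basis of `ℓ²`. -/
def stmt6E : Set (ℝ × lp (fun _ : ℕ => ℝ) 2) :=
  Set.range fun n : ℕ =>
    (((n : ℝ) / (n + 1)), ((n : ℝ) / (n + 1)) • lp.single 2 n (1 : ℝ))

/-! The points `pₙ = (aₙ, aₙ eₙ)`, `aₙ = n/(n+1)`, have norm `aₙ < 1` while `sup aₙ = 1`, so no
point of `E` is farthest from `0`; since `‖pₘ - pₙ‖ ≥ max aₘ aₙ ≥ 1/2` for `m ≠ n`, `E` is closed.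
Averaging `pᵢ` over `k ≤ i < 2k` gives a point of `co(E)` whose first coordinate lies in `[aₖ, 1]`
and whose `ℓ²` part has norm at most `1/√k` by orthogonality, so `(1,0) ∈ co̅(E)`. As `co̅(E)` lies
in the closed unit ball, `(1,0)` is a farthest point of it from `0`. -/

open Filter Topology Metric
open scoped InnerProductSpace

theorem isRemotalFrom_of_subset_closedBall {Y : Type*} [SeminormedAddCommGroup Y] {S : Set Y}
    {x s : Y} (hs : s ∈ S) (hS : S ⊆ closedBall x ‖x - s‖) : IsRemotalFrom S x := by
  refine ⟨s, hs, (IsGreatest.csSup_eq ⟨Set.mem_image_of_mem (fun t => ‖x - t‖) hs, ?_⟩).symm⟩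
  rintro _ ⟨t, ht, rfl⟩
  simpa [dist_eq_norm, norm_sub_rev t] using hS ht

section Orthonormal

variable {𝕜 E ι : Type*} [RCLike 𝕜] [NormedAddCommGroup E] [InnerProductSpace 𝕜 E] {v : ι → E}

theorem Orthonormal.norm_sum_smul_sq (hv : Orthonormal 𝕜 v) (s : Finset ι) (c : ι → 𝕜) :
    ‖∑ i ∈ s, c i • v i‖ ^ 2 = ∑ i ∈ s, ‖c i‖ ^ 2 := by
  have := hv.inner_sum c c s
  rw [inner_self_eq_norm_sq_to_K] at this
  simp only [RCLike.conj_mul] at this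
  exact_mod_cast this

theorem Orthonormal.norm_le_norm_smul_sub_smul (hv : Orthonormal 𝕜 v) {i j : ι} (hij : i ≠ j)
    (c d : 𝕜) : ‖c‖ ≤ ‖c • v i - d • v j‖ := by
  calc ‖c‖ = ‖⟪v i, c • v i - d • v j⟫_𝕜‖ := by
        simp [inner_sub_right, inner_smul_right, hv.inner_eq_zero hij, hv.norm_eq_one]
    _ ≤ ‖v i‖ * ‖c • v i - d • v j‖ := norm_inner_le_norm _ _
    _ = ‖c • v i - d • v j‖ := by rw [hv.norm_eq_one, one_mul]

end Orthonormal

namespace RemotalCounterexample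

abbrev ℓ2 := lp (fun _ : ℕ => ℝ) 2

def e (n : ℕ) : ℓ2 := lp.single 2 n 1

def a (n : ℕ) : ℝ := n / (n + 1)

def point (n : ℕ) : ℝ × ℓ2 := (a n, a n • e n)

theorem range_point : Set.range point = stmt6E := rfl

theorem orthonormal_e : Orthonormal ℝ e := by
  rw [orthonormal_iff_ite]
  intro i j
  simp [e, lp.inner_single_left, lp.single_apply, Pi.single_apply]

theorem one_sub_a (n : ℕ) : 1 - a n = 1 / (n + 1) := by
  rw [a]; field_simp; ring

theorem a_nonneg (n : ℕ) : 0 ≤ a n := by unfold a; positivity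

theorem a_lt_one (n : ℕ) : a n < 1 := by
  have : (0 : ℝ) < 1 / (n + 1) := by positivity
  linarith [one_sub_a n]

theorem a_mono : Monotone a := fun m n h => by
  have : (1 : ℝ) / (n + 1) ≤ 1 / (m + 1) := by gcongr
  linarith [one_sub_a m, one_sub_a n]

theorem tendsto_a : Tendsto a atTop (𝓝 1) :=
  tendsto_natCast_div_add_atTop 1

theorem iSup_a : ⨆ n, a n = 1 :=
  tendsto_nhds_unique (tendsto_atTop_ciSup a_mono ⟨1, by rintro _ ⟨n, rfl⟩; exact (a_lt_one n).le⟩)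
    tendsto_a

theorem norm_point (n : ℕ) : ‖point n‖ = a n := by
  simp [point, Prod.norm_def, norm_smul, orthonormal_e.norm_eq_one, abs_of_nonneg (a_nonneg n)]

theorem half_le_dist_point {m n : ℕ} (h : m ≠ n) : 1 / 2 ≤ dist (point m) (point n) := by
  have hm : a m ≤ dist (point m) (point n) := by
    calc a m = ‖a m‖ := (Real.norm_of_nonneg (a_nonneg m)).symm
      _ ≤ ‖a m • e m - a n • e n‖ := orthonormal_e.norm_le_norm_smul_sub_smul h _ _
      _ ≤ dist (point m) (point n) := by rw [← dist_eq_norm]; exact le_max_right _ _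
  have hn : a n ≤ dist (point m) (point n) := by
    calc a n = ‖a n‖ := (Real.norm_of_nonneg (a_nonneg n)).symm
      _ ≤ ‖a n • e n - a m • e m‖ := orthonormal_e.norm_le_norm_smul_sub_smul h.symm _ _
      _ ≤ dist (point m) (point n) := by
        rw [← dist_eq_norm, dist_comm]; exact le_max_right _ _
  have a_one : a 1 = 1 / 2 := by norm_num [a]
  rcases Nat.eq_zero_or_pos m with rfl | hm0
  · linarith [a_mono (Nat.one_le_iff_ne_zero.mpr h.symm)]
  · linarith [a_mono hm0]

theorem isClosed_stmt6E : IsClosed stmt6E := by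
  refine isClosed_of_pairwise_le_dist one_half_pos ?_
  rw [← range_point]
  rintro _ ⟨m, rfl⟩ _ ⟨n, rfl⟩ hne
  exact half_le_dist_point fun h => hne (h ▸ rfl)

theorem stmt6E_subset_closedBall : stmt6E ⊆ closedBall 0 1 := by
  rw [← range_point]
  rintro _ ⟨n, rfl⟩
  simpa [norm_point] using (a_lt_one n).le

theorem sSup_norm_image_stmt6E : sSup ((fun x => ‖x‖) '' stmt6E) = 1 := by
  rw [← range_point, ← Set.range_comp]
  simp only [Function.comp_def, norm_point]
  exact iSup_a

theorem not_isRemotalFrom_stmt6E : ¬ IsRemotalFrom stmt6E 0 := by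
  rintro ⟨s, hs, h⟩
  rw [← range_point] at hs
  obtain ⟨n, rfl⟩ := hs
  simp only [zero_sub, norm_neg] at h
  rw [sSup_norm_image_stmt6E, norm_point] at h
  exact (a_lt_one n).ne h

def blockAvg (k : ℕ) : ℝ × ℓ2 := (k : ℝ)⁻¹ • ∑ i ∈ Finset.Ico k (2 * k), point i

theorem card_Ico_two_mul (k : ℕ) : (Finset.Ico k (2 * k)).card = k := by
  simp only [Nat.card_Ico]; omega

theorem blockAvg_mem_convexHull {k : ℕ} (hk : 0 < k) : blockAvg k ∈ convexHull ℝ stmt6E := by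
  have := (Finset.Ico k (2 * k)).centerMass_mem_convexHull (s := stmt6E) (w := fun _ => (1 : ℝ))
    (fun _ _ => zero_le_one) (by simp [hk]) (z := point) fun i _ => Set.mem_range_self i
  simpa [Finset.centerMass, blockAvg, two_mul] using this

theorem blockAvg_fst (k : ℕ) : (blockAvg k).1 = (k : ℝ)⁻¹ * ∑ i ∈ Finset.Ico k (2 * k), a i := by
  simp [blockAvg, point, Prod.fst_sum]

theorem blockAvg_snd (k : ℕ) :
    (blockAvg k).2 = ∑ i ∈ Finset.Ico k (2 * k), ((k : ℝ)⁻¹ * a i) • e i := by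
  simp [blockAvg, point, Prod.snd_sum, Finset.smul_sum, smul_smul]

theorem a_le_blockAvg_fst {k : ℕ} (hk : 0 < k) : a k ≤ (blockAvg k).1 := by
  have hsum := (Finset.Ico k (2 * k)).card_nsmul_le_sum a (a k)
    fun i hi => a_mono (Finset.mem_Ico.mp hi).1
  rw [card_Ico_two_mul, nsmul_eq_mul] at hsum
  rw [blockAvg_fst, le_inv_mul_iff₀ (by positivity)]
  exact hsum

theorem blockAvg_fst_le_one (k : ℕ) : (blockAvg k).1 ≤ 1 := by
  have hsum := (Finset.Ico k (2 * k)).sum_le_card_nsmul a 1 fun i _ => (a_lt_one i).le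
  rw [card_Ico_two_mul, nsmul_eq_mul, mul_one] at hsum
  rw [blockAvg_fst]
  exact inv_mul_le_one_of_le₀ hsum (Nat.cast_nonneg k)

theorem norm_blockAvg_snd_sq_le (k : ℕ) : ‖(blockAvg k).2‖ ^ 2 ≤ (k : ℝ)⁻¹ := by
  have hcoef (i : ℕ) : ‖(k : ℝ)⁻¹ * a i‖ ^ 2 ≤ (k : ℝ)⁻¹ ^ 2 := by
    have hnonneg : 0 ≤ (k : ℝ)⁻¹ * a i := mul_nonneg (by positivity) (a_nonneg i)
    rw [Real.norm_of_nonneg hnonneg]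
    exact pow_le_pow_left₀ hnonneg (mul_le_of_le_one_right (by positivity) (a_lt_one i).le) 2
  have hsum := (Finset.Ico k (2 * k)).sum_le_card_nsmul _ _ fun i _ => hcoef i
  rw [card_Ico_two_mul, nsmul_eq_mul] at hsum
  rw [blockAvg_snd, orthonormal_e.norm_sum_smul_sq]
  refine hsum.trans_eq ?_
  rcases k.eq_zero_or_pos with rfl | hk
  · simp
  · field_simp

theorem tendsto_blockAvg : Tendsto blockAvg atTop (𝓝 (1, 0)) := by
  have hfst : Tendsto (fun k => (blockAvg k).1) atTop (𝓝 1) :=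
    tendsto_of_tendsto_of_tendsto_of_le_of_le' tendsto_a tendsto_const_nhds
      ((eventually_gt_atTop 0).mono fun _ => a_le_blockAvg_fst)
      (Eventually.of_forall blockAvg_fst_le_one)
  have hsnd : Tendsto (fun k => (blockAvg k).2) atTop (𝓝 0) := by
    refine squeeze_zero_norm (fun k => ?_)
      (by simpa only [Real.sqrt_zero] using
        (tendsto_inv_atTop_zero.comp tendsto_natCast_atTop_atTop).sqrt)
    exact Real.le_sqrt_of_sq_le (norm_blockAvg_snd_sq_le k)
  exact hfst.prodMk_nhds hsnd

theorem one_zero_mem_closure_convexHull : ((1 : ℝ), (0 : ℓ2)) ∈ closure (convexHull ℝ stmt6E) :=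
  mem_closure_of_tendsto tendsto_blockAvg
    ((eventually_gt_atTop 0).mono fun _ => blockAvg_mem_convexHull)

theorem isRemotalFrom_closure_convexHull : IsRemotalFrom (closure (convexHull ℝ stmt6E)) 0 := by
  refine isRemotalFrom_of_subset_closedBall one_zero_mem_closure_convexHull ?_
  simpa [Prod.norm_def] using closure_minimal
    (convexHull_min stmt6E_subset_closedBall (convex_closedBall 0 1)) isClosed_closedBall

end RemotalCounterexample

open RemotalCounterexample

/-- In `X = ℝ ⊕_∞ ℓ²`, the set `E` is norm-closed and bounded but not
remotal from `0`, while its closed convex hull is remotal from `0`: indeed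
`(1,0) ∈ co̅(E)` and `‖(1,0)‖ = 1 = sup {‖e‖ : e ∈ E}`. -/
theorem stmt6 :
    IsClosed stmt6E ∧ Bornology.IsBounded stmt6E ∧
      ¬ IsRemotalFrom stmt6E (0 : ℝ × lp (fun _ : ℕ => ℝ) 2) ∧
      ((1 : ℝ), (0 : lp (fun _ : ℕ => ℝ) 2)) ∈ closure (convexHull ℝ stmt6E) ∧
      ‖(((1 : ℝ), (0 : lp (fun _ : ℕ => ℝ) 2)))‖ = 1 ∧
      sSup ((fun e => ‖e‖) '' stmt6E) = 1 ∧
      IsRemotalFrom (closure (convexHull ℝ stmt6E)) (0 : ℝ × lp (fun _ : ℕ => ℝ) 2) :=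
  ⟨isClosed_stmt6E, isBounded_closedBall.subset stmt6E_subset_closedBall,
    not_isRemotalFrom_stmt6E, one_zero_mem_closure_convexHull, by simp [Prod.norm_def],
    sSup_norm_image_stmt6E, isRemotalFrom_closure_convexHull⟩

end
end

section
/- Let X be a Banach space, K ⊆ X a closed bounded convex set, and x ∈ X. If some point of F(x, K) is a strongly exposed point of K, and E ⊆ X is a set with K = co̅(E), then F(x, E) is nonempty, i.e., E is remotal from x. -/
/-! A continuous convex function has the same upper bounds on `E` as on `co̅(E)`, because its
closed sublevel sets are closed and convex. Applied to the functional `f` exposing `k₀`, this gives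
a sequence in `E` along which `f` tends to `sup f(K)`; strong exposedness makes it converge to `k₀`,
so `k₀ ∈ E`. Applied to `t ↦ ‖x - t‖`, it shows that the farthest distance from `x` is the same on
`E` as on `K`, so `k₀ ∈ F(x, E)`. -/

open Filter

/-- The set of farthest points of `S` from `x`. -/
def farthestPts {Y : Type*} [SeminormedAddCommGroup Y] (x : Y) (S : Set Y) : Set Y :=
  {s ∈ S | ‖x - s‖ = sSup ((fun t => ‖x - t‖) '' S)}

/-- `k₀` is a strongly exposed point of `K` : some `f ∈ X*` attains its supremum over `K`
exactly at `k₀`, and every sequence in `K` along which `f` tends to that supremum converges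
in norm to `k₀`. -/
def IsStronglyExposedPt {X : Type*} [NormedAddCommGroup X] [NormedSpace ℝ X]
    (K : Set X) (k₀ : X) : Prop :=
  k₀ ∈ K ∧ ∃ f : X →L[ℝ] ℝ, f k₀ = sSup ((fun k => f k) '' K) ∧
    ∀ u : ℕ → X, (∀ n, u n ∈ K) →
      Tendsto (fun n => f (u n)) atTop (nhds (sSup ((fun k => f k) '' K))) →
      Tendsto u atTop (nhds k₀)

open Set Topology

section ConvexSup

variable {X : Type*} [AddCommGroup X] [Module ℝ X] [TopologicalSpace X] {g : X → ℝ}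

theorem ConvexOn.upperBounds_image_closure_convexHull (hg : ConvexOn ℝ univ g)
    (hc : Continuous g) (E : Set X) :
    upperBounds (g '' closure (convexHull ℝ E)) = upperBounds (g '' E) := by
  refine subset_antisymm
    (upperBounds_mono_set (image_mono (subset_convexHull ℝ E |>.trans subset_closure)))
    fun b hb => ?_
  have hsub : closure (convexHull ℝ E) ⊆ {y | g y ≤ b} :=
    closure_minimal
      (convexHull_min (fun e he => hb (mem_image_of_mem g he)) (by simpa using hg.convex_le b))
      (isClosed_le hc continuous_const)
  rintro _ ⟨k, hk, rfl⟩
  exact hsub hk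

theorem ConvexOn.sSup_image_closure_convexHull (hg : ConvexOn ℝ univ g) (hc : Continuous g)
    (E : Set X) : sSup (g '' closure (convexHull ℝ E)) = sSup (g '' E) := by
  have hub := hg.upperBounds_image_closure_convexHull hc E
  rcases E.eq_empty_or_nonempty with rfl | hne
  · simp
  by_cases hbdd : BddAbove (g '' E)
  · have hlub : IsLUB (g '' closure (convexHull ℝ E)) (sSup (g '' E)) := by
      unfold IsLUB; rw [hub]; exact isLUB_csSup (hne.image g) hbdd
    exact hlub.csSup_eq ((hne.image g).mono (image_mono
      (subset_convexHull ℝ E |>.trans subset_closure)))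
  · have hbdd' : ¬ BddAbove (g '' closure (convexHull ℝ E)) := by
      rwa [BddAbove, hub]
    rw [Real.sSup_of_not_bddAbove hbdd, Real.sSup_of_not_bddAbove hbdd']

end ConvexSup

theorem IsStronglyExposedPt.mem_closure_of_closure_convexHull {X : Type*} [NormedAddCommGroup X]
    [NormedSpace ℝ X] {E : Set X} {k₀ : X}
    (hE : Bornology.IsBounded E) (h : IsStronglyExposedPt (closure (convexHull ℝ E)) k₀) :
    k₀ ∈ closure E := by
  obtain ⟨hk₀, f, -, hf⟩ := h
  have hne : E.Nonempty :=
    convexHull_nonempty_iff.1 (closure_nonempty_iff.1 ⟨k₀, hk₀⟩)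
  have hsup : sSup (f '' closure (convexHull ℝ E)) = sSup (f '' E) :=
    (f.toLinearMap.convexOn convex_univ).sSup_image_closure_convexHull f.continuous E
  obtain ⟨s, -, hs, hsE⟩ :=
    exists_seq_tendsto_sSup (hne.image f) (f.lipschitz.isBounded_image hE).bddAbove
  choose u huE hfu using hsE
  have hu : Tendsto u atTop (𝓝 k₀) :=
    hf u (fun n => subset_closure (subset_convexHull ℝ E (huE n)))
      (by simpa only [hfu, hsup] using hs)
  exact mem_closure_of_tendsto hu (Eventually.of_forall huE)

theorem stmt8_general {X : Type*} [NormedAddCommGroup X] [NormedSpace ℝ X]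
    (K : Set X) (hKbdd : Bornology.IsBounded K)
    (x : X) (k₀ : X) (hk₀ : k₀ ∈ farthestPts x K) (hse : IsStronglyExposedPt K k₀)
    (E : Set X) (hEcl : IsClosed E) (hKE : K = closure (convexHull ℝ E)) :
    (farthestPts x E).Nonempty := by
  subst hKE
  have hk₀E : k₀ ∈ E := hEcl.closure_subset
    (hse.mem_closure_of_closure_convexHull
      (hKbdd.subset (subset_convexHull ℝ E |>.trans subset_closure)))
  have hdist : ConvexOn ℝ univ fun t => ‖x - t‖ := by
    simpa only [dist_comm _ x, dist_eq_norm] using convexOn_dist x convex_univ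
  have hfar := hk₀.2
  rw [hdist.sSup_image_closure_convexHull (by fun_prop) E] at hfar
  exact ⟨k₀, hk₀E, hfar⟩

/-- Let `K` be a closed bounded convex subset of a Banach space `X` and
`x ∈ X`. If some point of `F(x, K)` is a strongly exposed point of `K`, and `E` is a
(norm-closed) set with `K = co̅(E)`, then `F(x, E)` is nonempty, i.e. `E` is remotal
from `x`. -/
theorem stmt8 {X : Type*} [NormedAddCommGroup X] [NormedSpace ℝ X] [CompleteSpace X]
    (K : Set X) (hKcl : IsClosed K) (hKbdd : Bornology.IsBounded K) (hKcvx : Convex ℝ K)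
    (x : X) (k₀ : X) (hk₀ : k₀ ∈ farthestPts x K) (hse : IsStronglyExposedPt K k₀)
    (E : Set X) (hEcl : IsClosed E) (hKE : K = closure (convexHull ℝ E)) :
    (farthestPts x E).Nonempty :=
  stmt8_general K hKbdd x k₀ hk₀ hse E hEcl hKE
end

section
/- Let Y = (ℓ¹, |||·|||) with |||·||| equivalent to the ℓ¹ norm, E = {(n/(n+1))·eₙ/|||eₙ||| : n ∈ ℕ} ∪ {0}, and let K be the σ(ℓ¹, c₀)-closed convex hull of E. Then K is contained in the closed unit ball of Y, i.e., |||y||| ≤ 1 for all y ∈ K, and moreover K equals the norm-closed convex hull of E. -/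
open scoped ZeroAtInfty
open Filter

noncomputable section

/-- `ℓ¹ = lp (fun _ : ℕ => ℝ) 1`. -/
abbrev ellOne := lp (fun _ : ℕ => ℝ) 1

theorem ellOne.summable_mul (x : ellOne) (f : C₀(ℕ, ℝ)) :
    Summable (fun i => x i * f i) := by
  have hx : Summable (fun i => ‖x i‖) := by
    simpa using (lp.memℓp x).summable (by norm_num)
  refine Summable.of_norm_bounded (hx.mul_right ‖f‖) ?_
  intro i
  rw [norm_mul]
  exact mul_le_mul_of_nonneg_left (f.toBCF.norm_coe_le_norm i) (norm_nonneg _)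

/-- The canonical map `ℓ¹ → (c₀)*` (the latter with its weak-star topology), `x ↦ (f ↦ ∑' i,
x i * f i)`; it realizes the weak-star topology `σ(ℓ¹, c₀)` on `ℓ¹`. -/
def ellOneToWeakDualC0 (x : ellOne) : WeakDual ℝ C₀(ℕ, ℝ) :=
  LinearMap.mkContinuous
    { toFun := fun f => ∑' i, x i * f i
      map_add' := by
        intro f g
        simp only [ZeroAtInftyContinuousMap.coe_add, Pi.add_apply, mul_add]
        exact Summable.tsum_add (ellOne.summable_mul x f) (ellOne.summable_mul x g)
      map_smul' := by
        intro c f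
        simp only [ZeroAtInftyContinuousMap.coe_smul, Pi.smul_apply, smul_eq_mul,
          RingHom.id_apply]
        rw [← tsum_mul_left]
        congr 1; ext i; ring }
    (∑' i, ‖x i‖)
    (by
      intro f
      simp only [LinearMap.coe_mk, AddHom.coe_mk]
      have hx : Summable (fun i => ‖x i‖) := by
        simpa using (lp.memℓp x).summable (by norm_num)
      calc ‖∑' i, x i * f i‖ ≤ ∑' i, ‖x i * f i‖ :=
            norm_tsum_le_tsum_norm ((ellOne.summable_mul x f).norm)
        _ ≤ ∑' i, ‖x i‖ * ‖f‖ := by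
            refine Summable.tsum_le_tsum (fun i => ?_) (ellOne.summable_mul x f).norm
              (hx.mul_right ‖f‖)
            rw [norm_mul]
            exact mul_le_mul_of_nonneg_left (f.toBCF.norm_coe_le_norm i) (norm_nonneg _)
        _ = (∑' i, ‖x i‖) * ‖f‖ := tsum_mul_right)

/-! Every point of `E` has at most one nonzero coordinate, and it lies in `[0, cₙ]` with
`cₙ = (n/(n+1)) / |||eₙ|||`. Testing against the finitely supported elements of `c₀`, which are
weak*-continuous functionals, every `x` in the weak*-closed convex hull satisfies `0 ≤ xₙ ≤ cₙ`
and `∑_{n ∈ F} xₙ / cₙ ≤ 1` for every finite `F`. Hence the partial sums `∑_{n ∈ F} xₙ eₙ` are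
convex combinations of points of `E` (the missing mass goes to `0 ∈ E`), and they converge to `x`
in norm. The other inclusion is the continuity of `ℓ¹ → (c₀)*`, and `|||·||| ≤ 1` holds on `E`,
hence on its closed convex hull. -/

section ConvexHull

variable {𝕜 E ι : Type*} [Field 𝕜] [LinearOrder 𝕜] [IsStrictOrderedRing 𝕜]
  [AddCommGroup E] [Module 𝕜 E]

theorem sum_smul_mem_convexHull_of_sum_le_one {s : Set E} (h0 : (0 : E) ∈ s) {t : Finset ι}
    {w : ι → 𝕜} {z : ι → E} (hw : ∀ i ∈ t, 0 ≤ w i) (hw₁ : ∑ i ∈ t, w i ≤ 1)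
    (hz : ∀ i ∈ t, z i ∈ s) : ∑ i ∈ t, w i • z i ∈ convexHull 𝕜 s := by
  rcases (Finset.sum_nonneg hw).eq_or_lt with hσ | hσ
  · rw [Finset.sum_eq_zero fun i hi => by
      rw [(Finset.sum_eq_zero_iff_of_nonneg hw).1 hσ.symm i hi, zero_smul]]
    exact subset_convexHull 𝕜 s h0
  · have h := ((convex_convexHull 𝕜 s).starConvex (subset_convexHull 𝕜 s h0)).smul_mem
      (t.centerMass_mem_convexHull hw hσ hz) hσ.le hw₁
    rwa [Finset.centerMass, smul_inv_smul₀ hσ.ne'] at h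

end ConvexHull

theorem le_of_mem_closure_convexHull {E : Type*} [AddCommGroup E] [Module ℝ E]
    [TopologicalSpace E] {g : E → ℝ} (hg : IsLinearMap ℝ g) (hgc : Continuous g) {s : Set E}
    {a : ℝ} (hs : ∀ y ∈ s, g y ≤ a) {x : E} (hx : x ∈ closure (convexHull ℝ s)) : g x ≤ a :=
  closure_minimal (convexHull_min hs (convex_halfSpace_le hg a))
    (isClosed_le hgc continuous_const) hx

theorem norm_div_norm_smul_le {F : Type*} [NormedAddCommGroup F] [NormedSpace ℝ F] (u : F)
    {a : ℝ} (ha : 0 ≤ a) : ‖(a / ‖u‖) • u‖ ≤ a := by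
  rw [norm_smul, Real.norm_of_nonneg (by positivity)]
  rcases (norm_nonneg u).eq_or_lt with hu | hu
  · simp [← hu, ha]
  · rw [div_mul_cancel₀ _ hu.ne']

theorem closure_convexHull_subset_preimage_closedBall {E F : Type*} [NormedAddCommGroup E]
    [NormedSpace ℝ E] [NormedAddCommGroup F] [NormedSpace ℝ F] (T : E →L[ℝ] F) {s : Set E}
    {r : ℝ} (hs : ∀ v ∈ s, ‖T v‖ ≤ r) :
    closure (convexHull ℝ s) ⊆ T ⁻¹' Metric.closedBall 0 r :=
  closure_minimal
    (convexHull_min (fun v hv => mem_closedBall_zero_iff.2 (hs v hv))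
      ((convex_closedBall 0 r).linear_preimage T.toLinearMap))
    (Metric.isClosed_closedBall.preimage T.continuous)

def c0Single (n : ℕ) : C₀(ℕ, ℝ) :=
  ⟨⟨(Pi.single n 1 : ℕ → ℝ), continuous_of_discreteTopology⟩, by
    show Tendsto (Pi.single n 1 : ℕ → ℝ) (cocompact ℕ) (nhds 0)
    rw [cocompact_eq_atTop]
    refine tendsto_const_nhds.congr' ?_
    filter_upwards [eventually_gt_atTop n] with k hk
    exact (Pi.single_eq_of_ne (M := fun _ : ℕ => ℝ) hk.ne' 1).symm⟩

namespace ellOneToWeakDualC0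

theorem apply_eq_tsum (x : ellOne) (f : C₀(ℕ, ℝ)) :
    ellOneToWeakDualC0 x f = ∑' i, x i * f i := rfl

theorem apply_c0Single (x : ellOne) (n : ℕ) : ellOneToWeakDualC0 x (c0Single n) = x n := by
  rw [apply_eq_tsum, tsum_eq_single n fun i hi => by simp [c0Single, Pi.single_eq_of_ne hi]]
  simp [c0Single]

theorem norm_apply_le (x : ellOne) (f : C₀(ℕ, ℝ)) :
    ‖ellOneToWeakDualC0 x f‖ ≤ ‖x‖ * ‖f‖ := by
  have hx : ‖x‖ = ∑' i, ‖x i‖ := by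
    simpa using lp.norm_eq_tsum_rpow (p := 1) (by norm_num) x
  rw [hx]
  refine ((ellOneToWeakDualC0 x : C₀(ℕ, ℝ) →L[ℝ] ℝ).le_opNorm f).trans ?_
  gcongr
  exact LinearMap.mkContinuous_norm_le _ (tsum_nonneg fun _ => norm_nonneg _) _

def linearMap : ellOne →ₗ[ℝ] WeakDual ℝ C₀(ℕ, ℝ) where
  toFun := ellOneToWeakDualC0
  map_add' x y := by
    refine ContinuousLinearMap.ext fun f => ?_
    show ellOneToWeakDualC0 (x + y) f = ellOneToWeakDualC0 x f + ellOneToWeakDualC0 y f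
    simp only [apply_eq_tsum, lp.coeFn_add, Pi.add_apply, add_mul]
    exact (ellOne.summable_mul x f).tsum_add (ellOne.summable_mul y f)
  map_smul' c x := by
    refine ContinuousLinearMap.ext fun f => ?_
    show ellOneToWeakDualC0 (c • x) f = c * ellOneToWeakDualC0 x f
    simp only [apply_eq_tsum, lp.coeFn_smul, Pi.smul_apply, smul_eq_mul, mul_assoc, tsum_mul_left]

theorem continuous : Continuous ellOneToWeakDualC0 :=
  WeakBilin.continuous_of_continuous_eval _ fun f =>
    (LinearMap.mkContinuous ((topDualPairing ℝ C₀(ℕ, ℝ)).flip f ∘ₗ linearMap) ‖f‖ fun x =>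
      (norm_apply_le x f).trans_eq (mul_comm _ _)).continuous

theorem closure_convexHull_subset_preimage (s : Set ellOne) :
    closure (convexHull ℝ s) ⊆
      ellOneToWeakDualC0 ⁻¹' closure (convexHull ℝ (ellOneToWeakDualC0 '' s)) :=
  Set.image_subset_iff.1 <| (image_closure_subset_closure_image continuous).trans <|
    closure_mono (linearMap.image_convexHull s).le

theorem apply_le_of_mem_closure_convexHull {s : Set ellOne} {x : ellOne}
    (hx : ellOneToWeakDualC0 x ∈ closure (convexHull ℝ (ellOneToWeakDualC0 '' s)))
    (f : C₀(ℕ, ℝ)) {a : ℝ} (hs : ∀ v ∈ s, ellOneToWeakDualC0 v f ≤ a) :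
    ellOneToWeakDualC0 x f ≤ a :=
  le_of_mem_closure_convexHull (g := fun φ : WeakDual ℝ C₀(ℕ, ℝ) => φ f)
    ⟨fun _ _ => rfl, fun _ _ => rfl⟩ (WeakDual.eval_continuous f) (Set.forall_mem_image.2 hs) hx

end ellOneToWeakDualC0

def scaledBasisWithZero (c : ℕ → ℝ) : Set ellOne :=
  Set.range (fun n : ℕ => c n • lp.single 1 n (1 : ℝ)) ∪ {0}

section ScaledBasis

variable {c : ℕ → ℝ}

theorem forall_mem_scaledBasisWithZero {p : ellOne → Prop} :
    (∀ v ∈ scaledBasisWithZero c, p v) ↔ p 0 ∧ ∀ n, p (lp.single 1 n (c n)) := by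
  simp [scaledBasisWithZero, or_imp, forall_and, ← lp.single_smul]

theorem mem_closure_convexHull_scaledBasisWithZero {x : ellOne}
    (hx : ∀ n, x n ∈ Set.Icc 0 (c n))
    (hsum : ∀ F : Finset ℕ, ∑ n ∈ F, (c n)⁻¹ * x n ≤ 1) :
    x ∈ closure (convexHull ℝ (scaledBasisWithZero c)) := by
  have hterm : ∀ n, lp.single 1 n (x n) =
      ((c n)⁻¹ * x n) • (c n • lp.single 1 n (1 : ℝ) : ellOne) := by
    intro n
    rw [smul_smul, ← lp.single_smul, smul_eq_mul, mul_one]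
    -- if `c n = 0` then `(c n)⁻¹ = 0`, but then also `x n = 0`
    rcases ((hx n).1.trans (hx n).2).eq_or_lt with hc | hc
    · simp [le_antisymm ((hx n).2.trans_eq hc.symm) (hx n).1]
    · field_simp
  refine mem_closure_of_tendsto (lp.hasSum_single ENNReal.one_ne_top x) (.of_forall fun F => ?_)
  simp only [hterm]
  exact sum_smul_mem_convexHull_of_sum_le_one (s := scaledBasisWithZero c) (Or.inr rfl)
    (fun n _ => mul_nonneg (inv_nonneg.2 ((hx n).1.trans (hx n).2)) (hx n).1) (hsum F)
    (fun n _ => Or.inl ⟨n, rfl⟩)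

theorem coord_mem_Icc_of_mem_weakStarClosure {x : ellOne}
    (hx : ellOneToWeakDualC0 x ∈
      closure (convexHull ℝ (ellOneToWeakDualC0 '' scaledBasisWithZero c)))
    (hc : ∀ n, 0 ≤ c n) (n : ℕ) :
    x n ∈ Set.Icc 0 (c n) := by
  have hδ := ellOneToWeakDualC0.apply_c0Single
  constructor
  · have h := ellOneToWeakDualC0.apply_le_of_mem_closure_convexHull hx (-c0Single n) (a := 0)
      (forall_mem_scaledBasisWithZero.2 ⟨by simp [hδ], fun m => ?_⟩)
    · simpa [hδ] using h
    · rw [map_neg, hδ, lp.single_apply, Pi.single_apply]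
      split_ifs <;> simp [hc]
  · refine hδ x n ▸ ellOneToWeakDualC0.apply_le_of_mem_closure_convexHull hx (c0Single n)
      (forall_mem_scaledBasisWithZero.2 ⟨by simp [hδ, hc], fun m => ?_⟩)
    rw [hδ, lp.single_apply, Pi.single_apply]
    split_ifs with h <;> simp [h, hc]

theorem sum_inv_mul_le_one_of_mem_weakStarClosure {x : ellOne}
    (hx : ellOneToWeakDualC0 x ∈
      closure (convexHull ℝ (ellOneToWeakDualC0 '' scaledBasisWithZero c)))
    (F : Finset ℕ) :
    ∑ n ∈ F, (c n)⁻¹ * x n ≤ 1 := by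
  have hf : ∀ y : ellOne, ellOneToWeakDualC0 y (∑ n ∈ F, (c n)⁻¹ • c0Single n) =
      ∑ n ∈ F, (c n)⁻¹ * y n := by
    simp [ellOneToWeakDualC0.apply_c0Single]
  refine hf x ▸ ellOneToWeakDualC0.apply_le_of_mem_closure_convexHull hx _
    (forall_mem_scaledBasisWithZero.2 ⟨by simp [hf], fun m => ?_⟩)
  rw [hf]
  simp only [lp.single_apply, Pi.single_apply, mul_ite, mul_zero, Finset.sum_ite_eq']
  split_ifs
  exacts [inv_mul_le_one, zero_le_one]

theorem preimage_closure_convexHull_image_scaledBasisWithZero (hc : ∀ n, 0 ≤ c n) :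
    ellOneToWeakDualC0 ⁻¹'
        closure (convexHull ℝ (ellOneToWeakDualC0 '' scaledBasisWithZero c)) =
      closure (convexHull ℝ (scaledBasisWithZero c)) :=
  subset_antisymm
    (fun _ hx => mem_closure_convexHull_scaledBasisWithZero
      (coord_mem_Icc_of_mem_weakStarClosure hx hc)
      (sum_inv_mul_le_one_of_mem_weakStarClosure hx))
    (ellOneToWeakDualC0.closure_convexHull_subset_preimage _)

end ScaledBasis

theorem stmt11_general {Y : Type*} [NormedAddCommGroup Y] [NormedSpace ℝ Y]
    (T : ellOne ≃L[ℝ] Y) :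
    (∀ y ∈ ellOneToWeakDualC0 ⁻¹' closure (convexHull ℝ (ellOneToWeakDualC0 ''
        ((Set.range fun n : ℕ =>
            (((n : ℝ) / (n + 1)) / ‖T (lp.single 1 n (1 : ℝ))‖) • lp.single 1 n (1 : ℝ)) ∪
          {0}))), ‖T y‖ ≤ 1) ∧
      ellOneToWeakDualC0 ⁻¹' closure (convexHull ℝ (ellOneToWeakDualC0 ''
        ((Set.range fun n : ℕ =>
            (((n : ℝ) / (n + 1)) / ‖T (lp.single 1 n (1 : ℝ))‖) • lp.single 1 n (1 : ℝ)) ∪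
          {0}))) =
      closure (convexHull ℝ
        ((Set.range fun n : ℕ =>
            (((n : ℝ) / (n + 1)) / ‖T (lp.single 1 n (1 : ℝ))‖) • lp.single 1 n (1 : ℝ)) ∪
          {0})) := by
  set c : ℕ → ℝ := fun n => ((n : ℝ) / (n + 1)) / ‖T (lp.single 1 n (1 : ℝ))‖
  have hK := preimage_closure_convexHull_image_scaledBasisWithZero (c := c) fun n => by positivity
  refine ⟨fun y hy => ?_, hK⟩
  have hball := closure_convexHull_subset_preimage_closedBall (T : ellOne →L[ℝ] Y)
    (s := scaledBasisWithZero c) (r := 1) ?_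
  · simpa using hball (hK ▸ hy)
  rintro v (⟨n, rfl⟩ | rfl)
  · have hn : (n : ℝ) / (n + 1) ≤ 1 := div_le_one_of_le₀ (by linarith) (by positivity)
    exact (T.map_smul _ _ ▸ norm_div_norm_smul_le _ (by positivity)).trans hn
  · simp

/-- Let `Y = (ℓ¹, |||·|||)` with `|||·|||` equivalent to the `ℓ¹` norm
(realized as `|||x||| = ‖T x‖` for an isomorphism `T` of `ℓ¹` onto a Banach space `Y`),
`E = {(n/(n+1)) • eₙ/|||eₙ||| : n ∈ ℕ} ∪ {0}`, and let `K` be the `σ(ℓ¹, c₀)`-closed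
convex hull of `E` (computed through the canonical embedding `ellOneToWeakDualC0` of `ℓ¹`
into the weak-star dual of `c₀`). Then `K` is contained in the closed unit ball of `Y`,
i.e. `|||y||| ≤ 1` for all `y ∈ K`, and moreover `K` equals the norm-closed convex hull
of `E`. -/
theorem stmt11 {Y : Type*} [NormedAddCommGroup Y] [NormedSpace ℝ Y] [CompleteSpace Y]
    (T : ellOne ≃L[ℝ] Y) :
    (∀ y ∈ ellOneToWeakDualC0 ⁻¹' closure (convexHull ℝ (ellOneToWeakDualC0 ''
        ((Set.range fun n : ℕ =>
            (((n : ℝ) / (n + 1)) / ‖T (lp.single 1 n (1 : ℝ))‖) • lp.single 1 n (1 : ℝ)) ∪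
          {0}))), ‖T y‖ ≤ 1) ∧
      ellOneToWeakDualC0 ⁻¹' closure (convexHull ℝ (ellOneToWeakDualC0 ''
        ((Set.range fun n : ℕ =>
            (((n : ℝ) / (n + 1)) / ‖T (lp.single 1 n (1 : ℝ))‖) • lp.single 1 n (1 : ℝ)) ∪
          {0}))) =
      closure (convexHull ℝ
        ((Set.range fun n : ℕ =>
            (((n : ℝ) / (n + 1)) / ‖T (lp.single 1 n (1 : ℝ))‖) • lp.single 1 n (1 : ℝ)) ∪
          {0})) :=
  stmt11_general T

end
end

section
/- Every infinite-dimensional Banach space X contains a closed bounded convex set K that is not remotal; in fact K can be chosen inside the closed unit ball with sup{‖k‖ : k ∈ K} = 1 but ‖k‖ < 1 for every k ∈ K, so K is not remotal from 0. -/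
open Set Filter Topology

lemma sSup_norm_image_eq_one_of_tendsto {Y : Type*} [SeminormedAddCommGroup Y] {K : Set Y}
    {v : ℕ → Y} (hK : ∀ k ∈ K, ‖k‖ ≤ 1) (hv : ∀ n, v n ∈ K)
    (hlim : Tendsto (fun n => ‖v n‖) atTop (𝓝 1)) :
    sSup ((fun k => ‖k‖) '' K) = 1 := by
  refine csSup_eq_of_forall_le_of_forall_lt_exists_gt ⟨_, mem_image_of_mem _ (hv 0)⟩
    (forall_mem_image.2 hK) fun w hw => ?_
  obtain ⟨n, hn⟩ := (hlim.eventually (lt_mem_nhds hw)).exists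
  exact ⟨_, mem_image_of_mem _ (hv n), hn⟩

lemma not_isRemotalFrom_zero_of_forall_norm_lt_s12 {Y : Type*} [SeminormedAddCommGroup Y]
    {K : Set Y} (hK : ∀ k ∈ K, ‖k‖ < sSup ((fun k => ‖k‖) '' K)) : ¬ IsRemotalFrom K 0 := by
  rintro ⟨k, hk, hk_eq⟩
  simp only [zero_sub, norm_neg] at hk_eq
  exact (hK k hk).ne hk_eq

section
variable {X : Type*} [NormedAddCommGroup X] [NormedSpace ℝ X]

lemma exists_finset_norming_of_finiteDimensional (E : Submodule ℝ X) [FiniteDimensional ℝ E]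
    {r : ℝ} (hr : r < 1) :
    ∃ G : Finset (X →L[ℝ] ℝ), (∀ g ∈ G, ‖g‖ ≤ 1) ∧
      ∀ z ∈ E, z ≠ 0 → ∃ g ∈ G, r * ‖z‖ < |g z| := by
  classical
  choose g hg_norm hg_apply using fun u : X => exists_dual_vector'' ℝ u
  have hcpt : IsCompact (((↑) : E → X) '' Metric.sphere 0 1) :=
    (isCompact_sphere 0 1).image continuous_subtype_val
  obtain ⟨t, -, hcover⟩ := hcpt.elim_nhds_subcover (fun u => {z | r < |g u z|}) <| by
    rintro _ ⟨u, hu, rfl⟩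
    refine (isOpen_lt continuous_const (g u).continuous.abs).mem_nhds ?_
    have hu : ‖(u : X)‖ = 1 := by simpa using hu
    simpa [hg_apply, hu] using hr
  refine ⟨t.image g, by simpa using fun u _ => hg_norm u, fun z hz hz0 => ?_⟩
  have hz' : ‖z‖ ≠ 0 := norm_ne_zero_iff.2 hz0
  obtain ⟨u, hut, hu⟩ := mem_iUnion₂.1 <| hcover
    ⟨⟨‖z‖⁻¹ • z, E.smul_mem _ hz⟩, by simp [norm_smul, hz'], rfl⟩
  refine ⟨g u, Finset.mem_image_of_mem g hut, ?_⟩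
  have hzpos : 0 < ‖z‖ := (norm_nonneg z).lt_of_ne' hz'
  simp only [mem_ofPred_eq, map_smul, smul_eq_mul, abs_mul, abs_inv, abs_norm] at hu
  rwa [lt_inv_mul_iff₀ hzpos, mul_comm] at hu

lemma exists_norm_eq_one_forall_mem_finset_eq_zero (hX : ¬ FiniteDimensional ℝ X)
    (G : Finset (X →L[ℝ] ℝ)) : ∃ x : X, ‖x‖ = 1 ∧ ∀ g ∈ G, g x = 0 := by
  let φ : X →ₗ[ℝ] G → ℝ := LinearMap.pi fun g => (g : X →L[ℝ] ℝ).toLinearMap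
  have hker : LinearMap.ker φ ≠ ⊥ := fun h =>
    hX (.of_injective φ (LinearMap.ker_eq_bot.1 h))
  obtain ⟨x, hx, hx0⟩ := Submodule.exists_mem_ne_zero_of_ne_bot hker
  refine ⟨‖x‖⁻¹ • x, by simp [norm_smul, hx0], fun g hg => ?_⟩
  have : g x = 0 := congrFun (LinearMap.mem_ker.1 hx) ⟨g, hg⟩
  simp [this]

lemma exists_seq_norm_eq_one_separating (hX : ¬ FiniteDimensional ℝ X) :
    ∃ e : ℕ → X, (∀ n, ‖e n‖ = 1) ∧
      ∀ x ∈ closure (Submodule.span ℝ (range e) : Set X), x ≠ 0 →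
        ∃ f : X →L[ℝ] ℝ, f x ≠ 0 ∧ ∃ m, ∀ n, m < n → f (e n) = 0 := by
  classical
  choose N hN_norm hN using fun T : Finset X =>
    exists_finset_norming_of_finiteDimensional (Submodule.span ℝ (T : Set X)) one_half_lt_one
  obtain ⟨a, ha, hr⟩ := exists_seq_of_forall_finset_exists
      (fun p : X × Finset X => ‖p.1‖ = 1 ∧ p.1 ∈ p.2)
      (fun p q => p.2 ⊆ q.2 ∧ ∀ g ∈ N p.2, g q.1 = 0) fun s _ => by
    obtain ⟨x, hx, hxG⟩ :=
      exists_norm_eq_one_forall_mem_finset_eq_zero hX (s.biUnion fun p => N p.2)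
    refine ⟨(x, insert x (s.biUnion Prod.snd)), ⟨hx, Finset.mem_insert_self _ _⟩,
      fun p hp => ⟨?_, fun g hg => hxG g (Finset.mem_biUnion.2 ⟨p, hp, hg⟩)⟩⟩
    exact (Finset.subset_biUnion_of_mem Prod.snd hp).trans (Finset.subset_insert _ _)
  refine ⟨fun n => (a n).1, fun n => (ha n).1, fun x hx hx0 => ?_⟩
  have hspan_mono : Monotone fun n => Submodule.span ℝ ((a n).2 : Set X) :=
    monotone_nat_of_le_succ fun n =>
      Submodule.span_mono (Finset.coe_subset.2 (hr n (n + 1) n.lt_succ_self).1)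
  have hspan_le : Submodule.span ℝ (range fun n => (a n).1) ≤
      ⨆ n, Submodule.span ℝ ((a n).2 : Set X) := Submodule.span_le.2 <| by
    rintro _ ⟨n, rfl⟩
    exact Submodule.mem_iSup_of_mem n (Submodule.subset_span (ha n).2)
  obtain ⟨z, hz, hxz⟩ := Metric.mem_closure_iff.1 hx (‖x‖ / 3) (by positivity)
  rw [dist_eq_norm] at hxz
  obtain ⟨m, hzm⟩ := (Submodule.mem_iSup_of_directed _ hspan_mono.directed_le).1 (hspan_le hz)
  have hz0 : z ≠ 0 := by
    rintro rfl
    rw [sub_zero] at hxz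
    linarith [norm_nonneg x]
  obtain ⟨g, hg, hgz⟩ := hN (a m).2 z hzm hz0
  refine ⟨g, fun hgx => ?_, m, fun n hmn => (hr m n hmn).2 g hg⟩
  -- `g` is small on `z` because it vanishes at the nearby point `x`, yet it half-norms `z`.
  have hgz_le : |g z| ≤ ‖x - z‖ := by
    have := g.le_of_opNorm_le (hN_norm _ g hg) (x - z)
    rwa [map_sub, hgx, zero_sub, norm_neg, one_mul, Real.norm_eq_abs] at this
  linarith [norm_le_norm_add_norm_sub' x z]

lemma exists_pos_norm_add_mul_abs_le_one {v : ℕ → X} {f : X →L[ℝ] ℝ} {m : ℕ} {ρ : ℝ}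
    (hρ : ρ < 1) (hv : ∀ n, ‖v n‖ ≤ 1) (hvm : ∀ n ≤ m, ‖v n‖ ≤ ρ)
    (hf : ∀ n, m < n → f (v n) = 0) :
    ∃ c > 0, ∀ y ∈ closure (convexHull ℝ (range v)), ‖y‖ + c * |f y| ≤ 1 := by
  set c := (1 - ρ) / (‖f‖ + 1)
  have hc : 0 < c := div_pos (sub_pos.2 hρ) (by positivity)
  refine ⟨c, hc, fun y hy => ?_⟩
  suffices closure (convexHull ℝ (range v)) ⊆ {y : X | ‖y‖ + c * |f y| ≤ 1} from this hy
  refine closure_minimal (convexHull_min ?_ ?_) ?_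
  · rintro _ ⟨n, rfl⟩
    show ‖v n‖ + c * |f (v n)| ≤ 1
    rcases le_or_gt n m with hnm | hnm
    · have hfv : |f (v n)| ≤ ‖f‖ := by
        simpa [Real.norm_eq_abs] using f.le_of_opNorm_le le_rfl (v n) |>.trans
          (mul_le_of_le_one_right (norm_nonneg f) (hv n))
      have hcf : c * ‖f‖ ≤ 1 - ρ := by
        rw [div_mul_eq_mul_div, div_le_iff₀ (by positivity)]
        nlinarith [norm_nonneg f]
      nlinarith [hvm n hnm]
    · simpa [hf n hnm] using hv n
  · have hconv : ConvexOn ℝ univ fun y => ‖y‖ + c * |f y| :=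
      (convexOn_norm convex_univ).add
        (((convexOn_norm convex_univ).comp_linearMap f.toLinearMap).smul hc.le)
    simpa using hconv.convex_le 1
  · exact isClosed_le (continuous_norm.add (continuous_const.mul f.continuous.abs))
      continuous_const

lemma norm_lt_one_of_mem_closure_convexHull {e : ℕ → X} {r : ℕ → ℝ} (he : ∀ n, ‖e n‖ ≤ 1)
    (hsep : ∀ x ∈ closure (Submodule.span ℝ (range e) : Set X), x ≠ 0 →
      ∃ f : X →L[ℝ] ℝ, f x ≠ 0 ∧ ∃ m, ∀ n, m < n → f (e n) = 0)
    (hr0 : ∀ n, 0 ≤ r n) (hr1 : ∀ n, r n < 1) (hr : Monotone r) {x : X}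
    (hx : x ∈ closure (convexHull ℝ (range fun n => r n • e n))) : ‖x‖ < 1 := by
  rcases eq_or_ne x 0 with rfl | hx0
  · simp
  have hx_span : x ∈ closure (Submodule.span ℝ (range e) : Set X) :=
    closure_mono (convexHull_min (range_subset_iff.2 fun n =>
      Submodule.smul_mem _ _ (Submodule.subset_span (mem_range_self n))) (Submodule.convex _)) hx
  obtain ⟨f, hfx, m, hf⟩ := hsep x hx_span hx0
  have hv : ∀ n, ‖r n • e n‖ ≤ r n := fun n => by
    rw [norm_smul, Real.norm_of_nonneg (hr0 n)]
    exact mul_le_of_le_one_right (hr0 n) (he n)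
  obtain ⟨c, hc, hK⟩ := exists_pos_norm_add_mul_abs_le_one (f := f) (hr1 m)
    (fun n => (hv n).trans (hr1 n).le) (fun n hn => (hv n).trans (hr hn))
    (fun n hn => by simp [hf n hn])
  linarith [hK x hx, mul_pos hc (abs_pos.2 hfx)]

end

theorem stmt12_general {X : Type*} [NormedAddCommGroup X] [NormedSpace ℝ X]
    (hinf : ¬ FiniteDimensional ℝ X) :
    ∃ K : Set X, K.Nonempty ∧ IsClosed K ∧ Bornology.IsBounded K ∧ Convex ℝ K ∧
      K ⊆ Metric.closedBall (0 : X) 1 ∧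
      sSup ((fun k => ‖k‖) '' K) = 1 ∧ (∀ k ∈ K, ‖k‖ < 1) ∧
      ¬ IsRemotalFrom K (0 : X) := by
  obtain ⟨e, he, hsep⟩ := exists_seq_norm_eq_one_separating hinf
  set r : ℕ → ℝ := fun n => n / (n + 1)
  have hr0 (n : ℕ) : 0 ≤ r n := by positivity
  have hr1 (n : ℕ) : r n < 1 := (div_lt_one (by positivity)).2 (lt_add_one _)
  have hr_mono : Monotone r := fun m n hmn => by
    have hmn' : (m : ℝ) ≤ n := Nat.cast_le.2 hmn
    have hm1 : (0 : ℝ) < m + 1 := by positivity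
    simp only [r, div_le_div_iff₀ hm1 (by positivity : (0 : ℝ) < n + 1)]
    nlinarith
  set K := closure (convexHull ℝ (range fun n => r n • e n))
  have hv_mem (n : ℕ) : r n • e n ∈ K :=
    subset_closure (subset_convexHull ℝ _ (mem_range_self n))
  have hv_norm (n : ℕ) : ‖r n • e n‖ = r n := by simp [norm_smul, he, abs_of_nonneg (hr0 n)]
  have hK_lt : ∀ k ∈ K, ‖k‖ < 1 := fun k hk =>
    norm_lt_one_of_mem_closure_convexHull (fun n => (he n).le) hsep hr0 hr1 hr_mono hk
  have hK_ball : K ⊆ Metric.closedBall 0 1 := fun k hk =>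
    mem_closedBall_zero_iff.2 (hK_lt k hk).le
  have hK_sup : sSup ((fun k => ‖k‖) '' K) = 1 :=
    sSup_norm_image_eq_one_of_tendsto (fun k hk => (hK_lt k hk).le) hv_mem
      (by simpa [hv_norm] using tendsto_natCast_div_add_atTop (1 : ℝ))
  refine ⟨K, ⟨_, hv_mem 0⟩, isClosed_closure, Metric.isBounded_closedBall.subset hK_ball,
    (convex_convexHull ℝ _).closure, hK_ball, hK_sup, hK_lt, ?_⟩
  exact not_isRemotalFrom_zero_of_forall_norm_lt_s12 (by rwa [hK_sup])

/-- **Main theorem.** Every infinite-dimensional Banach space `X` contains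
a nonempty closed bounded convex set `K` that is not remotal; in fact `K` can be chosen
inside the closed unit ball with `sup {‖k‖ : k ∈ K} = 1` but `‖k‖ < 1` for every `k ∈ K`,
so `K` is not remotal from `0`. -/
theorem stmt12 {X : Type*} [NormedAddCommGroup X] [NormedSpace ℝ X] [CompleteSpace X]
    (hinf : ¬ FiniteDimensional ℝ X) :
    ∃ K : Set X, K.Nonempty ∧ IsClosed K ∧ Bornology.IsBounded K ∧ Convex ℝ K ∧
      K ⊆ Metric.closedBall (0 : X) 1 ∧
      sSup ((fun k => ‖k‖) '' K) = 1 ∧ (∀ k ∈ K, ‖k‖ < 1) ∧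
      ¬ IsRemotalFrom K (0 : X) :=
  stmt12_general hinf
end

section
/- For every infinite-dimensional Banach space X there is a closed convex set K contained in the open unit ball of X such that sup{‖x‖ : x ∈ K} = 1. -/
/-!
Choose a closed separable infinite-dimensional subspace `Y` and norm-one functionals `f k`
norming a dense sequence of `Y`. Then `N x = ∑ 2⁻ᵏ ‖f k x‖` is a continuous seminorm that
vanishes at no nonzero point of `Y`, yet is arbitrarily small on the unit sphere of `Y`, because
finitely many functionals have a common nonzero zero in the infinite-dimensional `Y`.
The set `K = {x ∈ Y | ‖x‖ + N x ≤ 1}` is closed and convex; positivity of `N` keeps it inside the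
open unit ball, and smallness of `N` on the sphere gives points of `K` of norm close to `1`.
-/

open Set TopologicalSpace

theorem exists_linearIndependent_nat_of_not_finiteDimensional {K V : Type*} [DivisionRing K]
    [AddCommGroup V] [Module K V] (h : ¬ FiniteDimensional K V) :
    ∃ u : ℕ → V, LinearIndependent K u := by
  let b := Module.Basis.ofVectorSpace K V
  have : Infinite (Module.Basis.ofVectorSpaceIndex K V) := by
    by_contra hfin
    rw [not_infinite_iff_finite] at hfin
    exact h (Module.Finite.of_basis b)
  exact ⟨b ∘ Infinite.natEmbedding _, b.linearIndependent.comp _ (Infinite.natEmbedding _).injective⟩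

theorem Submodule.exists_mem_ne_zero_forall_mem_eq_zero {K V ι : Type*} [Field K]
    [AddCommGroup V] [Module K V] {Y : Submodule K V} (hY : ¬ FiniteDimensional K Y)
    (s : Finset ι) (f : ι → V →ₗ[K] K) : ∃ y ∈ Y, y ≠ 0 ∧ ∀ i ∈ s, f i y = 0 := by
  let F : Y →ₗ[K] (s → K) := LinearMap.pi fun i => f i ∘ₗ Y.subtype
  obtain ⟨⟨y, hyY⟩, hyF, hy0⟩ := (Submodule.ne_bot_iff (LinearMap.ker F)).1 fun hker =>
    hY (Module.Finite.of_injective F (LinearMap.ker_eq_bot.1 hker))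
  refine ⟨y, hyY, fun h => hy0 (by simp [h]), fun i hi => ?_⟩
  simpa [F] using congr_fun (LinearMap.mem_ker.1 hyF) ⟨i, hi⟩

section Dual

variable {𝕜 X : Type*} [RCLike 𝕜] [NormedAddCommGroup X] [NormedSpace 𝕜 X]

variable (𝕜) in
theorem exists_isClosed_isSeparable_not_finiteDimensional (h : ¬ FiniteDimensional 𝕜 X) :
    ∃ Y : Submodule 𝕜 X, IsClosed (Y : Set X) ∧ IsSeparable (Y : Set X) ∧
      ¬ FiniteDimensional 𝕜 Y := by
  obtain ⟨u, hu⟩ := exists_linearIndependent_nat_of_not_finiteDimensional h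
  let Y := (Submodule.span 𝕜 (range u)).topologicalClosure
  have huY (n : ℕ) : u n ∈ Y :=
    Submodule.le_topologicalClosure _ (Submodule.subset_span (mem_range_self n))
  refine ⟨Y, Submodule.isClosed_topologicalClosure _, (countable_range u).isSeparable.span.closure,
    fun _ => ?_⟩
  exact Module.Finite.not_linearIndependent_of_infinite (R := 𝕜) (M := Y) (fun n => ⟨u n, huY n⟩)
    (LinearIndependent.of_comp Y.subtype hu)

variable (𝕜) in
theorem TopologicalSpace.IsSeparable.exists_seq_dual_separating {s : Set X} (hs : IsSeparable s) :
    ∃ f : ℕ → StrongDual 𝕜 X, (∀ k, ‖f k‖ ≤ 1) ∧ ∀ x ∈ s, (∀ k, f k x = 0) → x = 0 := by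
  obtain ⟨c, hc, hsc⟩ := hs
  obtain ⟨d, hd⟩ := (hc.insert 0).exists_eq_range (insert_nonempty 0 c)
  choose f hf1 hf2 using fun k => exists_dual_vector'' 𝕜 (d k)
  refine ⟨f, hf1, fun x hx hfx => norm_le_zero_iff.1 (le_of_forall_pos_lt_add fun ε hε => ?_)⟩
  have hx : x ∈ closure (range d) := hd ▸ closure_mono (subset_insert 0 c) (hsc hx)
  obtain ⟨_, ⟨k, rfl⟩, hxk⟩ := Metric.mem_closure_iff.1 hx (ε / 2) (half_pos hε)
  rw [dist_eq_norm] at hxk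
  have hdk : ‖d k‖ ≤ ‖x - d k‖ := calc
    ‖d k‖ = ‖f k (d k - x)‖ := by simp [hfx k, hf2 k]
    _ ≤ ‖d k - x‖ := ((f k).le_of_opNorm_le (hf1 k) _).trans_eq (one_mul _)
    _ = ‖x - d k‖ := norm_sub_rev _ _
  linarith [norm_le_norm_add_norm_sub' x (d k)]

theorem summable_half_pow_mul_norm_apply (f : ℕ → StrongDual 𝕜 X) (hf : ∀ k, ‖f k‖ ≤ 1)
    (x : X) : Summable fun k => (1 / 2 : ℝ) ^ k * ‖f k x‖ :=
  .of_nonneg_of_le (fun _ => by positivity)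
    (fun k => mul_le_mul_of_nonneg_left ((f k).le_of_opNorm_le (hf k) x) (by positivity))
    (summable_geometric_two.mul_right (1 * ‖x‖))

noncomputable def weightedSeminorm (f : ℕ → StrongDual 𝕜 X) (hf : ∀ k, ‖f k‖ ≤ 1) :
    Seminorm 𝕜 X :=
  Seminorm.of (fun x => ∑' k, (1 / 2 : ℝ) ^ k * ‖f k x‖)
    (fun x y => by
      rw [← (summable_half_pow_mul_norm_apply f hf x).tsum_add
        (summable_half_pow_mul_norm_apply f hf y)]
      refine (summable_half_pow_mul_norm_apply f hf _).tsum_le_tsum (fun k => ?_)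
        ((summable_half_pow_mul_norm_apply f hf x).add (summable_half_pow_mul_norm_apply f hf y))
      rw [map_add, ← mul_add]
      exact mul_le_mul_of_nonneg_left (norm_add_le _ _) (by positivity))
    (fun a x => by
      simp only [map_smul, smul_eq_mul, norm_mul, ← tsum_mul_left]
      congr 1 with k
      ring)

section WeightedSeminorm

variable (f : ℕ → StrongDual 𝕜 X) (hf : ∀ k, ‖f k‖ ≤ 1)

theorem weightedSeminorm_apply (x : X) :
    weightedSeminorm f hf x = ∑' k, (1 / 2 : ℝ) ^ k * ‖f k x‖ := rfl

theorem weightedSeminorm_le (x : X) : weightedSeminorm f hf x ≤ 2 * ‖x‖ :=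
  calc weightedSeminorm f hf x ≤ ∑' k : ℕ, (1 / 2 : ℝ) ^ k * ‖x‖ :=
        (summable_half_pow_mul_norm_apply f hf x).tsum_le_tsum
          (fun k => mul_le_mul_of_nonneg_left
            ((f k).le_of_opNorm_le (hf k) x |>.trans_eq (one_mul _)) (by positivity))
          (summable_geometric_two.mul_right _)
    _ = 2 * ‖x‖ := by rw [tsum_mul_right, tsum_geometric_two]

theorem continuous_weightedSeminorm : Continuous (weightedSeminorm f hf) :=
  Seminorm.continuous_of_le (q := 2 • normSeminorm 𝕜 X)
    (by simpa [Pi.mul_def] using continuous_norm.const_mul 2)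
    (fun x => by simpa using weightedSeminorm_le f hf x)

theorem weightedSeminorm_eq_zero_iff {x : X} : weightedSeminorm f hf x = 0 ↔ ∀ k, f k x = 0 := by
  rw [weightedSeminorm_apply, ← (summable_half_pow_mul_norm_apply f hf x).hasSum_iff,
    hasSum_zero_iff_of_nonneg fun _ => by positivity]
  simp [funext_iff]

theorem weightedSeminorm_le_of_forall_lt_eq_zero {M : ℕ} {x : X} (hx : ∀ k < M, f k x = 0) :
    weightedSeminorm f hf x ≤ 2 * (1 / 2 : ℝ) ^ M * ‖x‖ := by
  have htail : weightedSeminorm f hf x = (1 / 2 : ℝ) ^ M *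
      weightedSeminorm (fun k => f (k + M)) (fun k => hf (k + M)) x := by
    rw [weightedSeminorm_apply, weightedSeminorm_apply,
      ← (summable_half_pow_mul_norm_apply f hf x).sum_add_tsum_nat_add M,
      Finset.sum_eq_zero fun k hk => by simp [hx k (Finset.mem_range.1 hk)], zero_add,
      ← tsum_mul_left]
    simp only [pow_add]
    congr 1 with k
    ring
  rw [htail, mul_assoc, mul_left_comm]
  gcongr
  exact weightedSeminorm_le _ _ x

theorem exists_norm_eq_one_weightedSeminorm_lt {Y : Submodule 𝕜 X}
    (hY : ¬ FiniteDimensional 𝕜 Y) {ε : ℝ} (hε : 0 < ε) :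
    ∃ y ∈ Y, ‖y‖ = 1 ∧ weightedSeminorm f hf y < ε := by
  obtain ⟨M, hM⟩ := exists_pow_lt_of_lt_one (half_pos hε) (by norm_num : (1 / 2 : ℝ) < 1)
  obtain ⟨y, hyY, hy0, hyf⟩ :=
    Submodule.exists_mem_ne_zero_forall_mem_eq_zero hY (Finset.range M) fun k => (f k : X →ₗ[𝕜] 𝕜)
  refine ⟨(‖y‖⁻¹ : 𝕜) • y, Y.smul_mem _ hyY, norm_smul_inv_norm hy0, ?_⟩
  calc weightedSeminorm f hf ((‖y‖⁻¹ : 𝕜) • y) ≤ 2 * (1 / 2 : ℝ) ^ M * ‖(‖y‖⁻¹ : 𝕜) • y‖ :=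
        weightedSeminorm_le_of_forall_lt_eq_zero f hf fun k hk => by
          simpa [hy0] using hyf k (Finset.mem_range.2 hk)
    _ < ε := by rw [norm_smul_inv_norm hy0]; linarith

end WeightedSeminorm

end Dual

theorem exists_isClosed_convex_subset_ball_sSup_norm_eq_one {E : Type*} [NormedAddCommGroup E]
    [NormedSpace ℝ E] {Y : Submodule ℝ E} (hY : IsClosed (Y : Set E)) {p : Seminorm ℝ E}
    (hp : Continuous p) (hpos : ∀ y ∈ Y, y ≠ 0 → 0 < p y)
    (hsmall : ∀ ε > 0, ∃ y ∈ Y, ‖y‖ = 1 ∧ p y < ε) :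
    ∃ K : Set E, IsClosed K ∧ Convex ℝ K ∧ K ⊆ Metric.ball 0 1 ∧
      sSup ((fun x => ‖x‖) '' K) = 1 := by
  let q : Seminorm ℝ E := normSeminorm ℝ E + p
  have hq (x : E) : q x = ‖x‖ + p x := rfl
  refine ⟨Y ∩ q.closedBall 0 1, hY.inter ?_, Y.convex.inter (q.convex_closedBall 0 1), ?_, ?_⟩
  · rw [q.closedBall_zero_eq]
    exact isClosed_le (continuous_norm.add hp) continuous_const
  · rintro x ⟨hxY, hxq⟩
    rw [q.mem_closedBall_zero, hq] at hxq
    rw [mem_ball_zero_iff]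
    rcases eq_or_ne x 0 with rfl | hx0
    · simp
    · linarith [hpos x hxY hx0]
  · refine csSup_eq_of_forall_le_of_forall_lt_exists_gt ⟨0, 0, ⟨Y.zero_mem, by simp⟩, norm_zero⟩
      ?_ fun w hw => ?_
    · rintro _ ⟨x, ⟨-, hxq⟩, rfl⟩
      rw [q.mem_closedBall_zero, hq] at hxq
      linarith [apply_nonneg p x]
    · obtain ⟨y, hyY, hy1, hpy⟩ := hsmall ((1 - w) / 2) (by linarith)
      have hc : 0 < 1 + (1 - w) / 2 := by linarith
      refine ⟨_, ⟨(1 + (1 - w) / 2)⁻¹ • y, ⟨Y.smul_mem _ hyY, ?_⟩, rfl⟩, ?_⟩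
      · rw [q.mem_closedBall_zero, map_smul_eq_mul, hq, hy1, Real.norm_of_nonneg (inv_pos.2 hc).le,
          inv_mul_le_one₀ hc]
        linarith
      · dsimp only
        rw [norm_smul, hy1, mul_one, Real.norm_of_nonneg (inv_pos.2 hc).le, ← one_div,
          lt_div_iff₀ hc]
        nlinarith

theorem stmt13_general {X : Type*} [NormedAddCommGroup X] [NormedSpace ℝ X]
    (hinf : ¬ FiniteDimensional ℝ X) :
    ∃ K : Set X, IsClosed K ∧ Convex ℝ K ∧ K ⊆ Metric.ball (0 : X) 1 ∧
      sSup ((fun x => ‖x‖) '' K) = 1 := by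
  obtain ⟨Y, hYc, hYs, hYinf⟩ := exists_isClosed_isSeparable_not_finiteDimensional ℝ hinf
  obtain ⟨f, hf, hsep⟩ := hYs.exists_seq_dual_separating ℝ
  refine exists_isClosed_convex_subset_ball_sSup_norm_eq_one hYc
    (continuous_weightedSeminorm f hf) (fun y hy hy0 => ?_)
    fun ε hε => exists_norm_eq_one_weightedSeminorm_lt f hf hYinf hε
  exact (apply_nonneg _ y).lt_of_ne'
    fun h => hy0 (hsep y hy ((weightedSeminorm_eq_zero_iff f hf).1 h))

/-- For every infinite-dimensional Banach space `X` there is a closed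
convex set `K` contained in the open unit ball of `X` with `sup {‖x‖ : x ∈ K} = 1`. -/
theorem stmt13 {X : Type*} [NormedAddCommGroup X] [NormedSpace ℝ X] [CompleteSpace X]
    (hinf : ¬ FiniteDimensional ℝ X) :
    ∃ K : Set X, IsClosed K ∧ Convex ℝ K ∧ K ⊆ Metric.ball (0 : X) 1 ∧
      sSup ((fun x => ‖x‖) '' K) = 1 :=
  stmt13_general hinf
end

section
/- Let K ⊆ X* be a weak*-compact convex set, μ a Radon probability measure on K with barycenter x₀* ∈ K (so x₀*(x) = ∫_K k(x) dμ(k) for all x ∈ X), and suppose μ(E) = 1 for a weak*-closed subset E ⊆ K. If ‖x₀*‖ = M where M = sup{‖e‖ : e ∈ E}, then ‖k‖ = M for μ-almost every k ∈ E; in particular there exists e ∈ E with ‖e‖ = M. -/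
/-!
Weak*-compact sets are norm bounded (uniform boundedness) and the dual norm is weak*-lower
semicontinuous, so `k ↦ ‖k‖` is integrable and `‖x₀*‖ ≤ ∫ ‖k‖ dμ ≤ M`. The hypothesis
`‖x₀*‖ = M` forces equality, and a function bounded above by `M` whose mean is `M` equals `M`
almost everywhere.
-/

open WeakDual MeasureTheory Filter

namespace WeakDual

variable {X : Type*} [NormedAddCommGroup X] [NormedSpace ℝ X]

theorem exists_norm_le_of_isCompact [CompleteSpace X] {K : Set (WeakDual ℝ X)}
    (hK : IsCompact K) : ∃ C, ∀ k ∈ K, ‖toStrongDual k‖ ≤ C := by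
  have hb : Bornology.IsBounded K := isBounded_iff_isVonNBounded.2 (hK.isVonNBounded ℝ)
  rw [← isBounded_toWeakDual_preimage_iff_isBounded, isBounded_iff_forall_norm_le] at hb
  exact hb

theorem lowerSemicontinuous_norm_toStrongDual :
    LowerSemicontinuous fun k : WeakDual ℝ X => ‖toStrongDual k‖ := by
  rw [lowerSemicontinuous_iff_isClosed_preimage]
  intro c
  have hball : (fun k : WeakDual ℝ X => ‖toStrongDual k‖) ⁻¹' Set.Iic c =
      toStrongDual ⁻¹' Metric.closedBall 0 c := by
    ext k
    simp
  rw [hball]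
  exact isClosed_closedBall 0 c

theorem measurable_norm_toStrongDual [MeasurableSpace (WeakDual ℝ X)]
    [OpensMeasurableSpace (WeakDual ℝ X)] :
    Measurable fun k : WeakDual ℝ X => ‖toStrongDual k‖ :=
  lowerSemicontinuous_norm_toStrongDual.measurable

theorem norm_le_integral_norm_of_barycenter [MeasurableSpace (WeakDual ℝ X)]
    {μ : Measure (WeakDual ℝ X)} (hint : Integrable (fun k => ‖toStrongDual k‖) μ)
    {x₀ : WeakDual ℝ X} (hbary : ∀ x : X, x₀ x = ∫ k, k x ∂μ) :
    ‖toStrongDual x₀‖ ≤ ∫ k, ‖toStrongDual k‖ ∂μ := by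
  refine ContinuousLinearMap.opNorm_le_bound _ (integral_nonneg fun _ => norm_nonneg _) ?_
  intro x
  calc ‖toStrongDual x₀ x‖ = ‖∫ k, k x ∂μ‖ := congrArg norm (hbary x)
    _ ≤ ∫ k, ‖toStrongDual k‖ * ‖x‖ ∂μ :=
        norm_integral_le_of_norm_le (hint.mul_const ‖x‖)
          (Eventually.of_forall fun k => (toStrongDual k).le_opNorm x)
    _ = (∫ k, ‖toStrongDual k‖ ∂μ) * ‖x‖ := integral_mul_const _ _

end WeakDual

theorem ae_eq_const_of_ae_le_of_le_integral {α : Type*} [MeasurableSpace α] {μ : Measure α}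
    [IsProbabilityMeasure μ] {f : α → ℝ} {M : ℝ} (hf : Integrable f μ)
    (hle : ∀ᵐ a ∂μ, f a ≤ M) (hM : M ≤ ∫ a, f a ∂μ) : f =ᵐ[μ] fun _ => M := by
  have hmean : ∫ a, f a ∂μ = ∫ _, M ∂μ :=
    le_antisymm (integral_mono_ae hf (integrable_const M) hle) (by simpa using hM)
  exact (integral_eq_iff_of_ae_le hf (integrable_const M) hle).1 hmean

theorem stmt15_general {X : Type*} [NormedAddCommGroup X] [NormedSpace ℝ X] [CompleteSpace X]
    [MeasurableSpace (WeakDual ℝ X)] [BorelSpace (WeakDual ℝ X)]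
    (K : Set (WeakDual ℝ X)) (hK : IsCompact K)
    (E : Set (WeakDual ℝ X)) (hEK : E ⊆ K) (hEcl : IsClosed E)
    (μ : Measure (WeakDual ℝ X)) [IsProbabilityMeasure μ]
    (hμE : μ E = 1)
    (x₀ : WeakDual ℝ X)
    (hbary : ∀ x : X, x₀ x = ∫ k, k x ∂μ)
    (hM : ‖toStrongDual x₀‖ = sSup ((fun e => ‖toStrongDual e‖) '' E)) :
    (∀ᵐ k ∂μ, k ∈ E → ‖toStrongDual k‖ = sSup ((fun e => ‖toStrongDual e‖) '' E)) ∧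
      ∃ e ∈ E, ‖toStrongDual e‖ = sSup ((fun e => ‖toStrongDual e‖) '' E) := by
  obtain ⟨C, hC⟩ := exists_norm_le_of_isCompact hK
  have hbdd : BddAbove ((fun e => ‖toStrongDual e‖) '' E) := by
    refine ⟨C, ?_⟩
    rintro - ⟨e, he, rfl⟩
    exact hC e (hEK he)
  have haeE : ∀ᵐ k ∂μ, k ∈ E :=
    (ae_mem_iff_measure_eq hEcl.nullMeasurableSet).2 (by simp [hμE])
  have hint : Integrable (fun k => ‖toStrongDual k‖) μ :=
    .of_bound measurable_norm_toStrongDual.aestronglyMeasurable C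
      (haeE.mono fun k hk => by simpa using hC k (hEK hk))
  have hae := ae_eq_const_of_ae_le_of_le_integral hint
    (haeE.mono fun e he => le_csSup hbdd ⟨e, he, rfl⟩)
    (hM ▸ norm_le_integral_norm_of_barycenter hint hbary)
  obtain ⟨e, he, heE⟩ := (hae.and haeE).exists
  exact ⟨hae.mono fun k hk _ => hk, e, heE, he⟩

/-- Let `K ⊆ X*` be weak*-compact convex, `μ` a Radon (inner regular)
probability measure on `X*` carried by `K`, with barycenter `x₀* ∈ K` (i.e.
`x₀*(x) = ∫_K k(x) dμ(k)` for all `x ∈ X`), and suppose `μ(E) = 1` for a weak*-closed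
subset `E ⊆ K`. If `‖x₀*‖ = M := sup {‖e‖ : e ∈ E}`, then `‖k‖ = M` for `μ`-almost every
`k ∈ E`; in particular some `e ∈ E` has `‖e‖ = M`. -/
theorem stmt15 {X : Type*} [NormedAddCommGroup X] [NormedSpace ℝ X] [CompleteSpace X]
    [MeasurableSpace (WeakDual ℝ X)] [BorelSpace (WeakDual ℝ X)]
    (K : Set (WeakDual ℝ X)) (hK : IsCompact K) (hKcvx : Convex ℝ K)
    (E : Set (WeakDual ℝ X)) (hEK : E ⊆ K) (hEcl : IsClosed E) (hEne : E.Nonempty)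
    (μ : Measure (WeakDual ℝ X)) [IsProbabilityMeasure μ] [μ.InnerRegular]
    (hμK : μ K = 1) (hμE : μ E = 1)
    (x₀ : WeakDual ℝ X) (hx₀K : x₀ ∈ K)
    (hbary : ∀ x : X, x₀ x = ∫ k, k x ∂μ)
    (hM : ‖toStrongDual x₀‖ = sSup ((fun e => ‖toStrongDual e‖) '' E)) :
    (∀ᵐ k ∂μ, k ∈ E → ‖toStrongDual k‖ = sSup ((fun e => ‖toStrongDual e‖) '' E)) ∧
      ∃ e ∈ E, ‖toStrongDual e‖ = sSup ((fun e => ‖toStrongDual e‖) '' E) :=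
  stmt15_general K hK E hEK hEcl μ hμE x₀ hbary hM
end
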